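/- arXiv:2002.12468 — 9 statements merged into one kernel-verified Lean document; each statement's English description precedes it below -/
import Mathlib

section
/- Let 0 < α < 1. Define ψ₁(α,y) = y(1-y)^(α-1) / (1-(1-y)^α) for y ∈ (0,1). Then ψ₁(α,·) is strictly increasing in y on the interval (0,1); that is, for all 0 < y₁ < y₂ < 1, ψ₁(α,y₁) < ψ₁(α,y₂). -/
/-!
With `t = 1 - y` and `p = 1 - α ∈ (0, 1)`, one has `ψ₁(α, y)⁻¹ = 1 - (t ^ p - 1) / (t - 1)`,
one minus the slope of the secant of the strictly concave map `t ↦ t ^ p` through `t` and `1`.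
That slope strictly decreases in `t`, hence strictly increases in `y`, so the positive
quantity `ψ₁(α, y)` strictly increases in `y`.
-/

open Set

noncomputable def psi1 (α y : ℝ) : ℝ :=
  y * (1 - y) ^ (α - 1) / (1 - (1 - y) ^ α)

lemma psi1_pos {α y : ℝ} (hα : 0 < α) (hy0 : 0 < y) (hy1 : y < 1) : 0 < psi1 α y := by
  have ht : 0 < 1 - y := by linarith
  have hden : 0 < 1 - (1 - y) ^ α := sub_pos.2 (Real.rpow_lt_one ht.le (by linarith) hα)
  unfold psi1
  positivity

lemma inv_psi1 (α : ℝ) {y : ℝ} (hy0 : y ≠ 0) (hy1 : y < 1) :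
    (psi1 α y)⁻¹ = 1 - ((1 - y) ^ (1 - α) - 1) / ((1 - y) - 1) := by
  have ht : 0 < 1 - y := by linarith
  have hneg : (1 - y) ^ (α - 1) = ((1 - y) ^ (1 - α))⁻¹ := by
    rw [← Real.rpow_neg ht.le, neg_sub]
  have hα : (1 - y) ^ α = (1 - y) / (1 - y) ^ (1 - α) := by
    conv_lhs => rw [← sub_sub_cancel 1 α, Real.rpow_sub ht, Real.rpow_one]
  rw [psi1, inv_div, hneg, hα, sub_sub_cancel_left]
  field_simp
  ring

theorem psi1_strictMonoOn {α : ℝ} (hα0 : 0 < α) (hα1 : α < 1) :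
    StrictMonoOn (psi1 α) (Ioo 0 1) := by
  rintro y₁ ⟨hy₁0, hy₁1⟩ y₂ ⟨hy₂0, hy₂1⟩ h12
  have hconc := Real.strictConcaveOn_rpow (p := 1 - α) (by linarith) (by linarith)
  have hslope := hconc.secant_strict_mono (a := 1) (x := 1 - y₂) (y := 1 - y₁)
    (mem_Ici.2 zero_le_one) (mem_Ici.2 (by linarith)) (mem_Ici.2 (by linarith))
    (by linarith) (by linarith) (by linarith)
  simp only [Real.one_rpow] at hslope
  rw [← inv_lt_inv₀ (psi1_pos hα0 hy₂0 hy₂1) (psi1_pos hα0 hy₁0 hy₁1),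
    inv_psi1 α hy₁0.ne' hy₁1, inv_psi1 α hy₂0.ne' hy₂1]
  linarith

/-- Lemma 2(i): for `0 < α < 1`, the function
`ψ₁(α,y) = y (1-y)^(α-1) / (1 - (1-y)^α)` is strictly increasing in `y` on `(0,1)`. -/
theorem psi1_strictly_increasing (α : ℝ) (hα0 : 0 < α) (hα1 : α < 1) :
    ∀ y₁ y₂ : ℝ, 0 < y₁ → y₁ < y₂ → y₂ < 1 →
      y₁ * (1 - y₁) ^ (α - 1) / (1 - (1 - y₁) ^ α) <
        y₂ * (1 - y₂) ^ (α - 1) / (1 - (1 - y₂) ^ α) :=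
  fun _ _ hy₁ h12 hy₂ =>
    psi1_strictMonoOn hα0 hα1 ⟨hy₁, h12.trans hy₂⟩ ⟨hy₁.trans h12, hy₂⟩ h12
end

section
/- Let α > 1. Define ψ₁(α,y) = y(1-y)^(α-1) / (1-(1-y)^α) for y ∈ (0,1). Then ψ₁(α,·) is strictly decreasing in y on the interval (0,1); that is, for all 0 < y₁ < y₂ < 1, ψ₁(α,y₁) > ψ₁(α,y₂). -/
/-! With `t = 1 - y` and `p = 1 - α < 0` one has `1 / ψ₁(α, y) = 1 + (t ^ p - 1) / (1 - t)`,
and `(t ^ p - 1) / (1 - t)` is minus the slope of the secant of the strictly convex function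
`t ↦ t ^ p` between `t` and `1`. Secant slopes of a strictly convex function through a fixed point
increase strictly, so `1 / ψ₁` increases strictly in `y`. -/

open Real Set

lemma strictConvexOn_rpow_of_neg {p : ℝ} (hp : p < 0) :
    StrictConvexOn ℝ (Ioi 0) fun x : ℝ ↦ x ^ p := by
  refine StrictMonoOn.strictConvexOn_of_deriv (convex_Ioi 0)
    (fun x hx ↦ (continuousAt_rpow_const x p (Or.inl (ne_of_gt hx))).continuousWithinAt) ?_
  rw [interior_Ioi]
  intro x hx y hy hxy
  simp only [Real.deriv_rpow_const]
  exact mul_lt_mul_of_neg_left (rpow_lt_rpow_of_neg hx hxy (by linarith)) hp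

lemma strictMonoOn_one_sub_rpow_sub_one_div {p : ℝ} (hp : p < 0) :
    StrictMonoOn (fun y : ℝ ↦ ((1 - y) ^ p - 1) / y) (Ioo 0 1) := by
  rintro y₁ ⟨hy₁, -⟩ y₂ ⟨-, hy₂⟩ hlt
  have hsecant := (strictConvexOn_rpow_of_neg hp).secant_strict_mono (a := 1)
    (x := 1 - y₂) (y := 1 - y₁) (mem_Ioi.2 one_pos) (mem_Ioi.2 (by linarith))
    (mem_Ioi.2 (by linarith)) (by linarith) (by linarith) (by linarith)
  simp only [one_rpow, sub_sub_cancel_left, div_neg] at hsecant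
  linarith

lemma mul_one_sub_rpow_sub_one_div_eq_inv {α y : ℝ} (hy0 : 0 < y) (hy1 : y < 1) :
    y * (1 - y) ^ (α - 1) / (1 - (1 - y) ^ α) = (1 + ((1 - y) ^ (1 - α) - 1) / y)⁻¹ := by
  set t := 1 - y
  have ht0 : t ≠ 0 := by linarith
  set u := t ^ (α - 1) with hu
  have hu0 : u ≠ 0 := (rpow_pos_of_pos (by linarith) _).ne'
  have htα : t ^ α = t * u := by rw [hu, rpow_sub_one ht0]; field_simp
  have ht1α : t ^ (1 - α) = u⁻¹ := by rw [hu, ← rpow_neg (by linarith), neg_sub]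
  rw [htα, ht1α]
  calc y * u / (1 - t * u) = y / ((1 - t * u) / u) := by rw [div_div_eq_mul_div]
    _ = (1 + (u⁻¹ - 1) / y)⁻¹ := by
      field_simp
      ring

/-- Lemma 2(ii): for `α > 1`, the function
`ψ₁(α,y) = y (1-y)^(α-1) / (1 - (1-y)^α)` is strictly decreasing in `y` on `(0,1)`. -/
theorem psi1_strictly_decreasing (α : ℝ) (hα : 1 < α) :
    ∀ y₁ y₂ : ℝ, 0 < y₁ → y₁ < y₂ → y₂ < 1 →
      y₁ * (1 - y₁) ^ (α - 1) / (1 - (1 - y₁) ^ α) >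
        y₂ * (1 - y₂) ^ (α - 1) / (1 - (1 - y₂) ^ α) := by
  intro y₁ y₂ hy₁ hlt hy₂
  have hp : 1 - α < 0 := by linarith
  have hslope : ((1 - y₁) ^ (1 - α) - 1) / y₁ < ((1 - y₂) ^ (1 - α) - 1) / y₂ :=
    strictMonoOn_one_sub_rpow_sub_one_div hp ⟨hy₁, by linarith⟩ ⟨by linarith, hy₂⟩ hlt
  have hpos : 0 < 1 + ((1 - y₁) ^ (1 - α) - 1) / y₁ := by
    have hgt := one_lt_rpow_of_pos_of_lt_one_of_neg (x := 1 - y₁) (by linarith) (by linarith) hp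
    have := div_pos (sub_pos.2 hgt) hy₁
    linarith
  rw [mul_one_sub_rpow_sub_one_div_eq_inv hy₁ (by linarith),
    mul_one_sub_rpow_sub_one_div_eq_inv (hy₁.trans hlt) hy₂]
  exact inv_strictAnti₀ hpos (by linarith)
end

section
/- Fix 0 < α < 1 and β > 0. Let λ = (λ₁,…,λₙ) and μ = (μ₁,…,μₙ) be vectors of positive reals such that λ is majorized by μ. Then for every x > 0, ∏_{k=1}^{n} [1 - (1 - e^{λ_k(1-e^{x^β})})^α] ≤ ∏_{k=1}^{n} [1 - (1 - e^{μ_k(1-e^{x^β})})^α]. (In other words, if Xᵢ are independent with Exponentiated Chen distribution F(x;α,β,λᵢ) and Yᵢ are independent with distribution F(x;α,β,μᵢ), then X_{1:n} ≤_st Y_{1:n}: the survival function of the minimum of the X's is pointwise at most that of the minimum of the Y's.) -/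
/-!
Put `t = 1 - exp (x ^ β) < 0` and `φ y = log (1 - (1 - exp y) ^ α)`. Taking logarithms, the claim
is `∑ φ (λₖ t) ≤ ∑ φ (μₖ t)`. The derivative of `φ` on `y < 0` is `α / (1 - σ (1 - exp y))`, where
`σ w` is the slope of the concave map `v ↦ v ^ (1 - α)` between `w` and `1`; as `y` grows `w`
decreases, `σ w` increases, so `φ` is convex, and so is `l ↦ φ (l t)` on `l > 0`. Karamata's
inequality for this convex function and `λ ≺ μ` finishes the proof.
-/

noncomputable def sortedAsc {n : ℕ} (a : Fin n → ℝ) : Fin n → ℝ :=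
  a ∘ Tuple.sort a

noncomputable def MajorizedBy {n : ℕ} (a b : Fin n → ℝ) : Prop :=
  (∑ i, a i = ∑ i, b i) ∧
    ∀ k : ℕ, 1 ≤ k → k ≤ n - 1 →
      ∑ i ∈ Finset.univ.filter (fun i : Fin n => (i : ℕ) < k), sortedAsc a i ≥
        ∑ i ∈ Finset.univ.filter (fun i : Fin n => (i : ℕ) < k), sortedAsc b i

open Real Finset

lemma sum_comp_sortedAsc {n : ℕ} (a : Fin n → ℝ) (g : ℝ → ℝ) :
    ∑ i, g (sortedAsc a i) = ∑ i, g (a i) :=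
  Equiv.sum_comp (Tuple.sort a) (g ∘ a)

lemma sum_filter_val_lt_eq_sum_range {n k : ℕ} (hk : k ≤ n) (g : Fin n → ℝ) :
    ∑ i ∈ univ.filter (fun i : Fin n => (i : ℕ) < k), g i
      = ∑ j ∈ range k, if h : j < n then g ⟨j, h⟩ else 0 := by
  rw [sum_filter, sum_fin_eq_sum_range, ← sum_range_add_sum_Ico _ hk,
    sum_eq_zero (s := Ico k n) fun j hj => by simp only [mem_Ico] at hj; simp; omega, add_zero]
  refine sum_congr rfl fun j hj => ?_
  rw [mem_range] at hj
  simp [hj, show j < n by omega]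

lemma sum_range_mul_nonneg_of_monotoneOn {c d : ℕ → ℝ} {n : ℕ} (hc : MonotoneOn c (Set.Iio n))
    (hd : ∀ k < n, ∑ i ∈ range k, d i ≤ 0) (hsum : ∑ i ∈ range n, d i = 0) :
    0 ≤ ∑ i ∈ range n, c i * d i := by
  -- summation by parts, one index at a time
  have key : ∀ m < n, c m * ∑ i ∈ range (m + 1), d i ≤ ∑ i ∈ range (m + 1), c i * d i := by
    intro m hm
    induction m with
    | zero => simp
    | succ m ih =>
      have hcm : c m ≤ c (m + 1) := hc (by simp; omega) (by simpa using hm) (by omega)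
      have hD := hd (m + 1) hm
      rw [sum_range_succ _ (m + 1), sum_range_succ (fun i => c i * d i) (m + 1)]
      nlinarith [ih (by omega)]
  obtain _ | m := n
  · simp
  · simpa [hsum] using key m (by omega)

lemma MajorizedBy.sum_mul_sub_nonneg {n : ℕ} {a b c : Fin n → ℝ} (hab : MajorizedBy a b)
    (hc : Monotone c) : 0 ≤ ∑ i, c i * (sortedAsc b i - sortedAsc a i) := by
  set d : Fin n → ℝ := fun i => sortedAsc b i - sortedAsc a i
  let pad : (Fin n → ℝ) → ℕ → ℝ := fun g j => if h : j < n then g ⟨j, h⟩ else 0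
  have hprefix : ∀ k < n, ∑ j ∈ range k, pad d j ≤ 0 := by
    intro k hk
    obtain rfl | hk0 := Nat.eq_zero_or_pos k
    · simp
    rw [← sum_filter_val_lt_eq_sum_range hk.le, sum_sub_distrib]
    linarith [hab.2 k hk0 (by omega)]
  have htotal : ∑ j ∈ range n, pad d j = 0 := by
    have ha := sum_comp_sortedAsc a id
    have hb := sum_comp_sortedAsc b id
    simp only [id] at ha hb
    rw [← sum_fin_eq_sum_range, sum_sub_distrib, ha, hb, hab.1, sub_self]
  have hmono : MonotoneOn (pad c) (Set.Iio n) := by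
    intro i hi j hj hij
    simp only [Set.mem_Iio] at hi hj
    simpa [pad, hi, hj] using hc (Fin.mk_le_mk.2 hij)
  have h := sum_range_mul_nonneg_of_monotoneOn hmono hprefix htotal
  rw [sum_fin_eq_sum_range]
  refine h.trans_eq (sum_congr rfl fun j hj => ?_)
  simp [pad, mem_range.1 hj, d]

lemma ConvexOn.add_rightDeriv_mul_sub_le {s : Set ℝ} {f : ℝ → ℝ} {x y : ℝ} (hf : ConvexOn ℝ s f)
    (hx : x ∈ interior s) (hy : y ∈ s) : f x + derivWithin f (Set.Ioi x) x * (y - x) ≤ f y := by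
  rcases lt_trichotomy x y with hxy | rfl | hyx
  · have h := hf.rightDeriv_le_slope_of_mem_interior hx hy hxy
    rw [slope_def_field, le_div_iff₀ (sub_pos.2 hxy)] at h
    linarith
  · simp
  · have h := hf.slope_le_leftDeriv_of_mem_interior hy hx hyx
    rw [slope_def_field, div_le_iff₀ (sub_pos.2 hyx)] at h
    nlinarith [hf.leftDeriv_le_rightDeriv_of_mem_interior hx]

/-- Karamata's inequality: supporting lines at the sorted `a i` (right derivatives) reduce it to
`MajorizedBy.sum_mul_sub_nonneg`. -/
theorem ConvexOn.sum_le_sum_of_majorizedBy {s : Set ℝ} {f : ℝ → ℝ} (hf : ConvexOn ℝ s f)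
    {n : ℕ} {a b : Fin n → ℝ} (ha : ∀ i, a i ∈ interior s) (hb : ∀ i, b i ∈ s)
    (hab : MajorizedBy a b) : ∑ i, f (a i) ≤ ∑ i, f (b i) := by
  set A := sortedAsc a
  set B := sortedAsc b
  set c : Fin n → ℝ := fun i => derivWithin f (Set.Ioi (A i)) (A i)
  have hc : Monotone c := fun i j hij =>
    hf.monotoneOn_rightDeriv (ha _) (ha _) (Tuple.monotone_sort a hij)
  calc ∑ i, f (a i) = ∑ i, f (A i) := (sum_comp_sortedAsc a f).symm
    _ ≤ ∑ i, f (A i) + ∑ i, c i * (B i - A i) := le_add_of_nonneg_right (hab.sum_mul_sub_nonneg hc)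
    _ = ∑ i, (f (A i) + c i * (B i - A i)) := sum_add_distrib.symm
    _ ≤ ∑ i, f (B i) := sum_le_sum fun i _ => hf.add_rightDeriv_mul_sub_le (ha _) (hb _)
    _ = ∑ i, f (b i) := sum_comp_sortedAsc b f

section ExponentiatedChen

variable {α : ℝ}

lemma one_sub_one_sub_exp_rpow_pos (hα : 0 < α) {y : ℝ} (hy : y < 0) :
    0 < 1 - (1 - exp y) ^ α := by
  have h1 : exp y < 1 := exp_lt_one_iff.2 hy
  have h0 : 0 < 1 - exp y := by linarith
  linarith [rpow_lt_one h0.le (by linarith [exp_pos y]) hα]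

lemma hasDerivAt_log_one_sub_one_sub_exp_rpow (hα : 0 < α) {y : ℝ} (hy : y < 0) :
    HasDerivAt (fun y => log (1 - (1 - exp y) ^ α))
      (α * (1 - exp y) ^ (α - 1) * exp y / (1 - (1 - exp y) ^ α)) y := by
  have hw : 1 - exp y ≠ 0 := (sub_pos.2 (exp_lt_one_iff.2 hy)).ne'
  have h := ((((hasDerivAt_exp y).const_sub 1).rpow_const (Or.inl hw)).const_sub 1).log
    (one_sub_one_sub_exp_rpow_pos hα hy).ne'
  exact h.congr_deriv (by ring)

/-- With `w = 1 - exp y`, the left side is the derivative of `log (1 - (1 - exp y) ^ α)`; the right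
side shows it is monotone, since slopes of the concave `v ↦ v ^ (1 - α)` decrease. -/
lemma rpow_sub_one_mul_div_eq_div_one_sub_slope (hα : 0 < α) {w : ℝ} (hw0 : 0 < w) (hw1 : w < 1) :
    α * w ^ (α - 1) * (1 - w) / (1 - w ^ α) =
      α / (1 - slope (fun v : ℝ => v ^ (1 - α)) 1 w) := by
  have hA : 0 < w ^ α := rpow_pos_of_pos hw0 α
  have hA1 : w ^ α < 1 := rpow_lt_one hw0.le hw1 hα
  have : w - 1 ≠ 0 := by linarith
  have : 1 - w ≠ 0 := by linarith
  have : 1 - w ^ α ≠ 0 := by linarith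
  simp only [slope_def_field, rpow_sub hw0, rpow_one, one_rpow]
  have hD : 1 - (w / w ^ α - 1) / (w - 1) = w * (1 - w ^ α) / (w ^ α * (1 - w)) := by
    field_simp
    ring
  rw [hD]
  field_simp

lemma one_sub_slope_rpow_pos (hα : 0 < α) {w : ℝ} (hw0 : 0 < w) (hw1 : w < 1) :
    0 < 1 - slope (fun v : ℝ => v ^ (1 - α)) 1 w := by
  rw [slope_def_field, one_rpow, sub_pos, div_lt_one_of_neg (by linarith)]
  linarith [self_lt_rpow_of_lt_one hw0 hw1 (by linarith : 1 - α < 1)]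

lemma convexOn_log_one_sub_one_sub_exp_rpow (hα0 : 0 < α) (hα1 : α ≤ 1) :
    ConvexOn ℝ (Set.Iio 0) (fun y => log (1 - (1 - exp y) ^ α)) := by
  have hderiv : ∀ y ∈ Set.Iio (0 : ℝ), HasDerivAt (fun y => log (1 - (1 - exp y) ^ α))
      (α / (1 - slope (fun v : ℝ => v ^ (1 - α)) 1 (1 - exp y))) y := by
    intro y hy
    have hu := exp_lt_one_iff.2 hy
    rw [← rpow_sub_one_mul_div_eq_div_one_sub_slope hα0 (by linarith) (by linarith [exp_pos y]),
      sub_sub_cancel]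
    exact (hasDerivAt_log_one_sub_one_sub_exp_rpow hα0 hy).congr_deriv (by ring)
  refine MonotoneOn.convexOn_of_deriv (convex_Iio 0)
    (fun y hy => (hderiv y hy).continuousAt.continuousWithinAt) ?_ ?_ <;> rw [interior_Iio]
  · exact fun y hy => (hderiv y hy).differentiableAt.differentiableWithinAt
  intro y hy z hz hyz
  rw [(hderiv y hy).deriv, (hderiv z hz).deriv]
  have hwz : 0 < 1 - exp z := sub_pos.2 (exp_lt_one_iff.2 hz)
  have hwy : 0 ≤ 1 - exp y := by linarith [exp_le_exp.2 hyz]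
  have hslope : slope (fun v : ℝ => v ^ (1 - α)) 1 (1 - exp y) ≤
      slope (fun v : ℝ => v ^ (1 - α)) 1 (1 - exp z) :=
    (concaveOn_rpow (by linarith) (by linarith)).slope_anti (Set.mem_Ici.2 zero_le_one)
      ⟨Set.mem_Ici.2 hwz.le, (sub_lt_self 1 (exp_pos z)).ne⟩
      ⟨Set.mem_Ici.2 hwy, (sub_lt_self 1 (exp_pos y)).ne⟩
      (by linarith [exp_le_exp.2 hyz])
  exact div_le_div_of_nonneg_left hα0.le
    (one_sub_slope_rpow_pos hα0 hwz (sub_lt_self 1 (exp_pos z))) (by linarith)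

lemma convexOn_log_one_sub_one_sub_exp_mul_rpow (hα0 : 0 < α) (hα1 : α ≤ 1) {t : ℝ}
    (ht : t < 0) : ConvexOn ℝ (Set.Ioi 0) (fun l => log (1 - (1 - exp (l * t)) ^ α)) := by
  have h := (convexOn_log_one_sub_one_sub_exp_rpow hα0 hα1).comp_linearMap
    (LinearMap.mulRight ℝ t)
  have hpre : LinearMap.mulRight ℝ t ⁻¹' Set.Iio 0 = Set.Ioi 0 := by
    ext l
    simp [mul_neg_iff, ht, ht.not_gt]
  exact hpre ▸ h

end ExponentiatedChen

theorem series_st_order_lambda_alpha_lt_one_general (α β : ℝ) (hα0 : 0 < α) (hα1 : α < 1)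
    {n : ℕ} (lam mu : Fin n → ℝ)
    (hlam : ∀ i, 0 < lam i) (hmu : ∀ i, 0 < mu i) (hmaj : MajorizedBy lam mu) :
    ∀ x : ℝ, 0 < x →
      ∏ k, (1 - (1 - Real.exp (lam k * (1 - Real.exp (x ^ β)))) ^ α) ≤
        ∏ k, (1 - (1 - Real.exp (mu k * (1 - Real.exp (x ^ β)))) ^ α) := by
  intro x hx
  have ht : 1 - exp (x ^ β) < 0 := sub_neg.2 (one_lt_exp_iff.2 (rpow_pos_of_pos hx β))
  have hpos : ∀ l : ℝ, 0 < l → 0 < 1 - (1 - exp (l * (1 - exp (x ^ β)))) ^ α :=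
    fun l hl => one_sub_one_sub_exp_rpow_pos hα0 (mul_neg_of_pos_of_neg hl ht)
  rw [← log_le_log_iff (prod_pos fun k _ => hpos _ (hlam k)) (prod_pos fun k _ => hpos _ (hmu k)),
    log_prod fun k _ => (hpos _ (hlam k)).ne', log_prod fun k _ => (hpos _ (hmu k)).ne']
  refine (convexOn_log_one_sub_one_sub_exp_mul_rpow hα0 hα1.le ht).sum_le_sum_of_majorizedBy
    (fun i => ?_) hmu hmaj
  rw [interior_Ioi]
  exact hlam i

/-- Theorem 1 (case `0 < α < 1`): if `λ ≺ᵐ μ`, then the survival function of the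
series system with Exponentiated Chen components `F(x; α, β, λᵢ)` is pointwise at most
that of the series system with components `F(x; α, β, μᵢ)`, i.e. `X_{1:n} ≤_st Y_{1:n}`. -/
theorem series_st_order_lambda_alpha_lt_one (α β : ℝ) (hα0 : 0 < α) (hα1 : α < 1)
    (hβ : 0 < β) {n : ℕ} (lam mu : Fin n → ℝ)
    (hlam : ∀ i, 0 < lam i) (hmu : ∀ i, 0 < mu i) (hmaj : MajorizedBy lam mu) :
    ∀ x : ℝ, 0 < x →
      ∏ k, (1 - (1 - Real.exp (lam k * (1 - Real.exp (x ^ β)))) ^ α) ≤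
        ∏ k, (1 - (1 - Real.exp (mu k * (1 - Real.exp (x ^ β)))) ^ α) :=
  series_st_order_lambda_alpha_lt_one_general α β hα0 hα1 lam mu hlam hmu hmaj
end

section
/- Fix α > 1 and β > 0. Let λ = (λ₁,…,λₙ) and μ = (μ₁,…,μₙ) be vectors of positive reals such that λ is majorized by μ. Then for every x > 0, ∏_{k=1}^{n} [1 - (1 - e^{λ_k(1-e^{x^β})})^α] ≥ ∏_{k=1}^{n} [1 - (1 - e^{μ_k(1-e^{x^β})})^α]. (In other words, if Xᵢ are independent with Exponentiated Chen distribution F(x;α,β,λᵢ) and Yᵢ are independent with distribution F(x;α,β,μᵢ), then X_{1:n} ≥_st Y_{1:n}.) -/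
open Real Finset Set

/-- Bernoulli: for `0 ≤ u` and `1 ≤ α`, `1 + α * (u - 1) ≤ u ^ α`. -/
lemma ec_bernoulli {u α : ℝ} (hu : 0 ≤ u) (hα : 1 ≤ α) : 1 + α * (u - 1) ≤ u ^ α := by
  have h := one_add_mul_self_le_rpow_one_add (by linarith : (-1:ℝ) ≤ u - 1) hα
  have e : (1:ℝ) + (u - 1) = u := by ring
  rwa [e] at h

/-- The auxiliary function `h u = u^(α-1) (1-u) / (1-u^α)` is monotone on `(0,1)`. -/
lemma ec_h_mono {α : ℝ} (hα : 1 < α) :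
    MonotoneOn (fun u : ℝ => u ^ (α-1) * (1-u) / (1 - u ^ α)) (Set.Ioo (0:ℝ) 1) := by
  have hderiv : ∀ u ∈ Set.Ioo (0:ℝ) 1,
      HasDerivAt (fun u : ℝ => u ^ (α-1) * (1-u) / (1 - u ^ α))
        (((((α-1) * u ^ (α-1-1)) * (1-u) + u ^ (α-1) * (-1)) * (1 - u ^ α)
            - (u ^ (α-1) * (1-u)) * (0 - α * u ^ (α-1))) / ((1 - u ^ α) ^ 2)) u := by
    intro u hu
    have hu0 : 0 < u := hu.1
    have hA : u ^ α < 1 := Real.rpow_lt_one hu0.le hu.2 (by linarith)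
    have f1 : HasDerivAt (fun u : ℝ => u ^ (α-1)) ((α-1) * u ^ (α-1-1)) u :=
      Real.hasDerivAt_rpow_const (Or.inl hu0.ne')
    have f2 : HasDerivAt (fun u : ℝ => 1 - u) (-1) u := by
      simpa using (hasDerivAt_id u).const_sub 1
    have f3 : HasDerivAt (fun u : ℝ => 1 - u ^ α) (0 - α * u ^ (α-1)) u := by
      simpa using (Real.hasDerivAt_rpow_const (Or.inl hu0.ne') (p := α)).const_sub 1
    exact (f1.mul f2).div f3 (by nlinarith)
  have hnn : ∀ u ∈ Set.Ioo (0:ℝ) 1,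
      0 ≤ (((α-1) * u ^ (α-1-1)) * (1-u) + u ^ (α-1) * (-1)) * (1 - u ^ α)
            - (u ^ (α-1) * (1-u)) * (0 - α * u ^ (α-1)) := by
    intro u hu
    have hu0 : 0 < u := hu.1
    have e1 : u ^ (α-1) = u ^ (α-1-1) * u := by
      rw [← Real.rpow_add_one hu0.ne' (α-1-1)]; congr 1; ring
    have e3 : u ^ α = u ^ (α-1-1) * u * u := by
      rw [← Real.rpow_add_one hu0.ne' (α-1-1), ← Real.rpow_add_one hu0.ne']; congr 1; ring
    have hc : 0 ≤ u ^ (α-1-1) := (Real.rpow_pos_of_pos hu0 _).le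
    have hB : 1 - u ^ α ≤ α * (1-u) := by
      have := ec_bernoulli hu0.le hα.le; nlinarith
    have hB' : (0:ℝ) ≤ α * (1-u) - (1 - u ^ (α-1-1) * u * u) := by
      rw [← e3]; linarith
    rw [e1, e3]
    nlinarith [mul_nonneg hc hB']
  have hopen : interior (Set.Ioo (0:ℝ) 1) = Set.Ioo (0:ℝ) 1 := isOpen_Ioo.interior_eq
  have hdiff : DifferentiableOn ℝ (fun u : ℝ => u ^ (α-1) * (1-u) / (1 - u ^ α))
      (Set.Ioo (0:ℝ) 1) := fun u hu => (hderiv u hu).differentiableAt.differentiableWithinAt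
  refine monotoneOn_of_deriv_nonneg (convex_Ioo 0 1) hdiff.continuousOn
      (by rw [hopen]; exact hdiff) ?_
  intro u hu
  rw [hopen] at hu
  rw [(hderiv u hu).deriv]
  exact div_nonneg (hnn u hu) (sq_nonneg _)

section analytic
variable {α t : ℝ}

/-- Factor bounds: for `λ > 0`, `t < 0`, `0 < α`, `0 < 1 - (1-e^{λt})^α < 1`. -/
lemma ec_factor_pos (hα : 0 < α) (ht : t < 0) {l : ℝ} (hl : 0 < l) :
    0 < 1 - (1 - Real.exp (l * t)) ^ α ∧ (1 - Real.exp (l * t)) ^ α < 1 ∧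
      0 < 1 - Real.exp (l * t) ∧ Real.exp (l * t) < 1 := by
  have h1 : Real.exp (l * t) < 1 := by
    rw [Real.exp_lt_one_iff]; exact mul_neg_of_pos_of_neg hl ht
  have h2 : 0 < 1 - Real.exp (l * t) := by linarith
  have h3 : (1 - Real.exp (l * t)) ^ α < 1 :=
    Real.rpow_lt_one h2.le (by have := Real.exp_pos (l * t); linarith) hα
  exact ⟨by linarith, h3, h2, h1⟩

/-- Derivative of `g l = log (1 - (1-e^{lt})^α)`. -/
lemma ec_g_deriv (hα : 0 < α) (ht : t < 0) {l : ℝ} (hl : 0 < l) :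
    HasDerivAt (fun l : ℝ => Real.log (1 - (1 - Real.exp (l * t)) ^ α))
      (α * t * Real.exp (l * t) * (1 - Real.exp (l * t)) ^ (α - 1) /
        (1 - (1 - Real.exp (l * t)) ^ α)) l := by
  obtain ⟨hF, _, hw, _⟩ := ec_factor_pos hα ht hl
  have d1 : HasDerivAt (fun l : ℝ => Real.exp (l * t)) (t * Real.exp (l * t)) l := by
    simpa [mul_comm] using (hasDerivAt_mul_const t).exp
  have d2 : HasDerivAt (fun l : ℝ => 1 - Real.exp (l * t)) (0 - t * Real.exp (l * t)) l :=
    (hasDerivAt_const l 1).sub d1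
  have d3 : HasDerivAt (fun l : ℝ => (1 - Real.exp (l * t)) ^ α)
      ((0 - t * Real.exp (l * t)) * α * (1 - Real.exp (l * t)) ^ (α - 1)) l :=
    d2.rpow_const (Or.inl hw.ne')
  have d4 : HasDerivAt (fun l : ℝ => 1 - (1 - Real.exp (l * t)) ^ α)
      (0 - (0 - t * Real.exp (l * t)) * α * (1 - Real.exp (l * t)) ^ (α - 1)) l :=
    (hasDerivAt_const l 1).sub d3
  have d5 := d4.log hF.ne'
  convert d5 using 2
  ring

/-- The derivative `φ` written through `h`. -/
lemma ec_phi_eq (l : ℝ) :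
    α * t * Real.exp (l * t) * (1 - Real.exp (l * t)) ^ (α - 1) /
        (1 - (1 - Real.exp (l * t)) ^ α)
      = (α * t) * ((1 - Real.exp (l * t)) ^ (α-1) * (1 - (1 - Real.exp (l * t))) /
          (1 - (1 - Real.exp (l * t)) ^ α)) := by
  have : (1 : ℝ) - (1 - Real.exp (l * t)) = Real.exp (l * t) := by ring
  rw [this]; ring

/-- `φ` is antitone on `(0,∞)`. -/
lemma ec_phi_anti (hα : 1 < α) (ht : t < 0) {l₁ l₂ : ℝ} (h1 : 0 < l₁) (h12 : l₁ ≤ l₂) :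
    α * t * Real.exp (l₂ * t) * (1 - Real.exp (l₂ * t)) ^ (α - 1) /
        (1 - (1 - Real.exp (l₂ * t)) ^ α) ≤
      α * t * Real.exp (l₁ * t) * (1 - Real.exp (l₁ * t)) ^ (α - 1) /
        (1 - (1 - Real.exp (l₁ * t)) ^ α) := by
  have h2 : 0 < l₂ := lt_of_lt_of_le h1 h12
  obtain ⟨_, _, hw1, he1⟩ := ec_factor_pos (by linarith : (0:ℝ) < α) ht h1
  obtain ⟨_, _, hw2, he2⟩ := ec_factor_pos (by linarith : (0:ℝ) < α) ht h2
  rw [ec_phi_eq, ec_phi_eq]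
  have hmem1 : (1 - Real.exp (l₁ * t)) ∈ Set.Ioo (0:ℝ) 1 :=
    ⟨hw1, by have := Real.exp_pos (l₁ * t); linarith⟩
  have hmem2 : (1 - Real.exp (l₂ * t)) ∈ Set.Ioo (0:ℝ) 1 :=
    ⟨hw2, by have := Real.exp_pos (l₂ * t); linarith⟩
  have hle : 1 - Real.exp (l₂ * t) ≤ 1 - Real.exp (l₁ * t) → False → True := fun _ _ => trivial
  have hwle : 1 - Real.exp (l₁ * t) ≤ 1 - Real.exp (l₂ * t) := by
    have : l₂ * t ≤ l₁ * t := by nlinarith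
    have := Real.exp_le_exp.mpr this
    linarith
  have hm := ec_h_mono hα hmem1 hmem2 hwle
  have hat : α * t < 0 := mul_neg_of_pos_of_neg (by linarith) ht
  exact mul_le_mul_of_nonpos_left hm hat.le

/-- Supporting line inequality for the concave function `g`. -/
lemma ec_support_line (hα : 1 < α) (ht : t < 0) {u v : ℝ} (hu : 0 < u) (hv : 0 < v) :
    α * t * Real.exp (u * t) * (1 - Real.exp (u * t)) ^ (α - 1) /
        (1 - (1 - Real.exp (u * t)) ^ α) * (u - v) ≤
      Real.log (1 - (1 - Real.exp (u * t)) ^ α) -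
        Real.log (1 - (1 - Real.exp (v * t)) ^ α) := by
  set g : ℝ → ℝ := fun l => Real.log (1 - (1 - Real.exp (l * t)) ^ α) with hg
  set φ : ℝ → ℝ := fun l => α * t * Real.exp (l * t) * (1 - Real.exp (l * t)) ^ (α - 1) /
      (1 - (1 - Real.exp (l * t)) ^ α) with hφ
  have hα0 : (0:ℝ) < α := by linarith
  rcases lt_trichotomy u v with huv | huv | huv
  · -- u < v
    have hcont : ContinuousOn g (Set.Icc u v) := by
      intro z hz
      have hz0 : 0 < z := lt_of_lt_of_le hu hz.1
      exact ((ec_g_deriv hα0 ht hz0).continuousAt).continuousWithinAt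
    obtain ⟨c, hc, hcd⟩ := exists_hasDerivAt_eq_slope g φ huv hcont
      (fun z hz => ec_g_deriv hα0 ht (lt_of_lt_of_le hu hz.1.le))
    have hφc : φ c ≤ φ u := ec_phi_anti hα ht hu hc.1.le
    have : g v - g u = φ c * (v - u) := by
      rw [hcd, div_mul_cancel₀ _ (sub_ne_zero.mpr huv.ne')]
    nlinarith [this, hφc]
  · subst huv; simp
  · -- v < u
    have hcont : ContinuousOn g (Set.Icc v u) := by
      intro z hz
      have hz0 : 0 < z := lt_of_lt_of_le hv hz.1
      exact ((ec_g_deriv hα0 ht hz0).continuousAt).continuousWithinAt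
    obtain ⟨c, hc, hcd⟩ := exists_hasDerivAt_eq_slope g φ huv hcont
      (fun z hz => ec_g_deriv hα0 ht (lt_of_lt_of_le hv hz.1.le))
    have hφc : φ u ≤ φ c := ec_phi_anti hα ht (lt_of_lt_of_le hv hc.1.le) hc.2.le
    have : g u - g v = φ c * (u - v) := by
      rw [hcd, div_mul_cancel₀ _ (sub_ne_zero.mpr huv.ne')]
    nlinarith [this, hφc]

end analytic

/-- Abel summation bound over `range`. -/
lemma ec_abel (c d : ℕ → ℝ) (n : ℕ)
    (hc : ∀ i j, i ≤ j → j < n → c j ≤ c i)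
    (hD : ∀ k, k ≤ n → 0 ≤ ∑ i ∈ Finset.range k, d i)
    (hDn : ∑ i ∈ Finset.range n, d i = 0) :
    0 ≤ ∑ i ∈ Finset.range n, c i * d i := by
  rcases Nat.eq_zero_or_pos n with hn | hn
  · simp [hn]
  have key : ∀ m, 1 ≤ m → m ≤ n →
      c (m-1) * (∑ i ∈ Finset.range m, d i) ≤ ∑ i ∈ Finset.range m, c i * d i := by
    intro m hm1 hmn
    induction m with
    | zero => omega
    | succ m ih =>
      rcases Nat.eq_zero_or_pos m with hm0 | hm0
      · subst hm0; simp
      · have ihm := ih hm0 (by omega)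
        have hms : m + 1 - 1 = m := by omega
        have hmm : m - 1 ≤ m := Nat.sub_le m 1
        have hcm : c m ≤ c (m-1) := hc (m-1) m hmm (by omega)
        have hDm : 0 ≤ ∑ i ∈ Finset.range m, d i := hD m (by omega)
        rw [hms, Finset.sum_range_succ, Finset.sum_range_succ (fun i => c i * d i)]
        rw [Nat.succ_sub_one] at *
        nlinarith
  have := key n hn le_rfl
  rw [hDn] at this
  simpa using this

/-- Filter prefix sums over `Fin n` equal range sums of the extension by zero. -/
lemma ec_prefix_eq {n : ℕ} (f : Fin n → ℝ) (k : ℕ) (hk : k ≤ n) :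
    ∑ i ∈ Finset.univ.filter (fun i : Fin n => (i : ℕ) < k), f i
      = ∑ i ∈ Finset.range k, (fun i => if h : i < n then f ⟨i, h⟩ else 0) i := by
  induction k with
  | zero => simp
  | succ k ih =>
    have hkn : k < n := by omega
    have hins : Finset.univ.filter (fun i : Fin n => (i : ℕ) < k + 1)
        = insert (⟨k, hkn⟩ : Fin n) (Finset.univ.filter (fun i : Fin n => (i : ℕ) < k)) := by
      ext i
      simp only [Finset.mem_filter, Finset.mem_univ, true_and, Finset.mem_insert, Fin.ext_iff]
      omega
    rw [hins, Finset.sum_insert (by simp), Finset.sum_range_succ, ih (by omega)]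
    simp [hkn]
    ring

/-- Theorem 1 (case `α > 1`): if `λ ≺ᵐ μ`, then the survival function of the series
system with Exponentiated Chen components `F(x; α, β, λᵢ)` is pointwise at least
that of the series system with components `F(x; α, β, μᵢ)`, i.e. `X_{1:n} ≥_st Y_{1:n}`. -/
theorem series_st_order_lambda_alpha_gt_one (α β : ℝ) (hα : 1 < α)
    (hβ : 0 < β) {n : ℕ} (lam mu : Fin n → ℝ)
    (hlam : ∀ i, 0 < lam i) (hmu : ∀ i, 0 < mu i) (hmaj : MajorizedBy lam mu) :
    ∀ x : ℝ, 0 < x →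
      ∏ k, (1 - (1 - Real.exp (lam k * (1 - Real.exp (x ^ β)))) ^ α) ≥
        ∏ k, (1 - (1 - Real.exp (mu k * (1 - Real.exp (x ^ β)))) ^ α) := by
  intro x hx
  set t : ℝ := 1 - Real.exp (x ^ β) with hts
  have ht : t < 0 := by
    have hxb : 0 < x ^ β := Real.rpow_pos_of_pos hx β
    have : 1 < Real.exp (x ^ β) := by
      have := Real.add_one_le_exp (x ^ β); linarith
    simp only [hts]; linarith
  have hα0 : (0:ℝ) < α := by linarith
  set g : ℝ → ℝ := fun l => Real.log (1 - (1 - Real.exp (l * t)) ^ α) with hg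
  -- rewrite products as exp of sums of g
  have hprod : ∀ (v : Fin n → ℝ), (∀ i, 0 < v i) →
      ∏ k, (1 - (1 - Real.exp (v k * t)) ^ α) = Real.exp (∑ k, g (v k)) := by
    intro v hv
    rw [Real.exp_sum]
    refine Finset.prod_congr rfl (fun k _ => ?_)
    rw [hg]
    rw [Real.exp_log (ec_factor_pos hα0 ht (hv k)).1]
  rw [ge_iff_le, hprod lam hlam, hprod mu hmu, Real.exp_le_exp]
  -- pass to sorted rearrangements
  set a : Fin n → ℝ := sortedAsc lam with ha
  set b : Fin n → ℝ := sortedAsc mu with hb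
  have hsuma : ∀ (F : ℝ → ℝ), ∑ k, F (a k) = ∑ k, F (lam k) := fun F =>
    Equiv.sum_comp (Tuple.sort lam) (fun i => F (lam i))
  have hsumb : ∀ (F : ℝ → ℝ), ∑ k, F (b k) = ∑ k, F (mu k) := fun F =>
    Equiv.sum_comp (Tuple.sort mu) (fun i => F (mu i))
  rw [← hsuma g, ← hsumb g]
  have hapos : ∀ i, 0 < a i := fun i => hlam _
  have hbpos : ∀ i, 0 < b i := fun i => hmu _
  have hamono : Monotone a := Tuple.monotone_sort lam
  -- the difference sum
  set φ : ℝ → ℝ := fun l => α * t * Real.exp (l * t) * (1 - Real.exp (l * t)) ^ (α - 1) /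
      (1 - (1 - Real.exp (l * t)) ^ α) with hφ
  have hstep1 : ∑ k, φ (a k) * (a k - b k) ≤ ∑ k, g (a k) - ∑ k, g (b k) := by
    rw [← Finset.sum_sub_distrib]
    exact Finset.sum_le_sum fun k _ => ec_support_line hα ht (hapos k) (hbpos k)
  -- Abel bound: 0 ≤ ∑ φ(a k) (a k - b k)
  set cN : ℕ → ℝ := fun i => if h : i < n then φ (a ⟨i, h⟩) else 0 with hcN
  set dN : ℕ → ℝ := fun i => if h : i < n then a ⟨i, h⟩ - b ⟨i, h⟩ else 0 with hdN
  have hsum_ab : ∑ i, a i = ∑ i, b i := by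
    have h1 : ∑ i, a i = ∑ i, lam i := hsuma id
    have h2 : ∑ i, b i = ∑ i, mu i := hsumb id
    rw [h1, h2]; exact hmaj.1
  have hpre : ∀ k, k ≤ n → 0 ≤ ∑ i ∈ Finset.range k, dN i := by
    intro k hk
    have heq : ∑ i ∈ Finset.range k, dN i =
        (∑ i ∈ Finset.univ.filter (fun i : Fin n => (i : ℕ) < k), a i) -
        (∑ i ∈ Finset.univ.filter (fun i : Fin n => (i : ℕ) < k), b i) := by
      rw [ec_prefix_eq a k hk, ec_prefix_eq b k hk, ← Finset.sum_sub_distrib]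
      refine Finset.sum_congr rfl fun i hi => ?_
      have hin : i < n := lt_of_lt_of_le (Finset.mem_range.mp hi) hk
      simp [hdN, hin]
    rw [heq]
    rcases Nat.eq_zero_or_pos k with hk0 | hk1
    · simp [hk0]
    rcases eq_or_lt_of_le hk with hkn | hkn
    · rw [hkn]
      have hfull : Finset.univ.filter (fun i : Fin n => (i : ℕ) < n) = Finset.univ :=
        Finset.filter_true_of_mem (fun i _ => i.isLt)
      rw [hfull, hsum_ab]; simp
    · have := hmaj.2 k hk1 (by omega)
      rw [← ha, ← hb] at this  -- sortedAsc lam = a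
      linarith [this]
  have hDn : ∑ i ∈ Finset.range n, dN i = 0 := by
    have := ec_prefix_eq (fun i => a i - b i) n le_rfl
    have hfull : Finset.univ.filter (fun i : Fin n => (i : ℕ) < n) = Finset.univ :=
      Finset.filter_true_of_mem (fun i _ => i.isLt)
    rw [hfull] at this
    have heq : ∑ i ∈ Finset.range n, dN i = ∑ i : Fin n, (a i - b i) := by
      rw [this]
    rw [heq, Finset.sum_sub_distrib, hsum_ab]; ring
  have hcanti : ∀ i j, i ≤ j → j < n → cN j ≤ cN i := by
    intro i j hij hjn
    have hin : i < n := lt_of_le_of_lt hij hjn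
    simp only [hcN, dif_pos hin, dif_pos hjn]
    exact ec_phi_anti hα ht (hapos ⟨i, hin⟩) (hamono (by exact_mod_cast hij : (⟨i,hin⟩ : Fin n) ≤ ⟨j,hjn⟩))
  have habel := ec_abel cN dN n hcanti hpre hDn
  have hfin : ∑ i ∈ Finset.range n, cN i * dN i = ∑ k, φ (a k) * (a k - b k) := by
    have := ec_prefix_eq (fun i => φ (a i) * (a i - b i)) n le_rfl
    have hfull : Finset.univ.filter (fun i : Fin n => (i : ℕ) < n) = Finset.univ :=
      Finset.filter_true_of_mem (fun i _ => i.isLt)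
    rw [hfull] at this
    rw [this]
    refine Finset.sum_congr rfl fun i hi => ?_
    have hin : i < n := Finset.mem_range.mp hi
    simp [hcN, hdN, hin]
  rw [hfin] at habel
  linarith [hstep1, habel]
end

section
/- Fix α > 0 and β > 0. Let λ = (λ₁,…,λₙ) and μ = (μ₁,…,μₙ) be vectors of positive reals such that λ is majorized by μ. Then for every x > 0, ∏_{k=1}^{n} (1 - e^{λ_k(1-e^{x^β})})^α ≥ ∏_{k=1}^{n} (1 - e^{μ_k(1-e^{x^β})})^α. (In other words, if Xᵢ are independent with Exponentiated Chen distribution F(x;α,β,λᵢ) and Yᵢ are independent with distribution F(x;α,β,μᵢ), then X_{n:n} ≤_st Y_{n:n}: the distribution function of the maximum of the X's is pointwise at least that of the maximum of the Y's.) -/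
/-- The derivative of `l ↦ log (1 - exp (l * t))`. -/
noncomputable def gdAux (t l : ℝ) : ℝ := -(Real.exp (l * t) * t) / (1 - Real.exp (l * t))

lemma expAux_lt_one {t l : ℝ} (ht : t < 0) (hl : 0 < l) : Real.exp (l * t) < 1 := by
  have h : l * t < 0 := mul_neg_of_pos_of_neg hl ht
  simpa using Real.exp_lt_exp.mpr h

lemma gAux_hasDeriv {t : ℝ} (ht : t < 0) {l : ℝ} (hl : 0 < l) :
    HasDerivAt (fun y => Real.log (1 - Real.exp (y * t))) (gdAux t l) l := by
  have h0 : (1 : ℝ) - Real.exp (l * t) ≠ 0 := by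
    have := expAux_lt_one ht hl; linarith
  have h1 : HasDerivAt (fun y : ℝ => y * t) t l := hasDerivAt_mul_const t
  have h2 : HasDerivAt (fun y : ℝ => Real.exp (y * t)) (Real.exp (l * t) * t) l := h1.exp
  have h3 : HasDerivAt (fun y : ℝ => 1 - Real.exp (y * t)) (-(Real.exp (l * t) * t)) l :=
    h2.const_sub 1
  exact h3.log h0

lemma gdAux_antitone {t : ℝ} (ht : t < 0) {x y : ℝ} (hx : 0 < x) (hxy : x ≤ y) :
    gdAux t y ≤ gdAux t x := by
  have hy : 0 < y := lt_of_lt_of_le hx hxy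
  have hux : Real.exp (x * t) < 1 := expAux_lt_one ht hx
  have huy : Real.exp (y * t) < 1 := expAux_lt_one ht hy
  have hle : Real.exp (y * t) ≤ Real.exp (x * t) := by
    apply Real.exp_le_exp.mpr; nlinarith
  have h1 : (0:ℝ) < 1 - Real.exp (x * t) := by linarith
  have h2 : (0:ℝ) < 1 - Real.exp (y * t) := by linarith
  unfold gdAux
  rw [div_le_div_iff₀ h2 h1]
  nlinarith [mul_nonneg (neg_nonneg.mpr ht.le) (sub_nonneg.mpr hle)]

/-- Concavity/supergradient inequality for `l ↦ log (1 - exp (l * t))`. -/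
lemma gAux_super {t : ℝ} (ht : t < 0) {x y : ℝ} (hx : 0 < x) (hy : 0 < y) :
    Real.log (1 - Real.exp (y * t)) - Real.log (1 - Real.exp (x * t)) ≤ gdAux t x * (y - x) := by
  set g := fun l : ℝ => Real.log (1 - Real.exp (l * t)) with hg
  rcases lt_trichotomy x y with h | h | h
  · obtain ⟨c, hc, hc'⟩ := exists_hasDerivAt_eq_slope g (gdAux t) h
      (fun l hl => (gAux_hasDeriv ht (lt_of_lt_of_le hx hl.1)).continuousAt.continuousWithinAt)
      (fun l hl => gAux_hasDeriv ht (hx.trans hl.1))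
    have hcx : gdAux t c ≤ gdAux t x := gdAux_antitone ht hx hc.1.le
    have heq : g y - g x = gdAux t c * (y - x) := by
      rw [hc', div_mul_cancel₀]
      exact sub_ne_zero.mpr h.ne'
    rw [heq]
    exact mul_le_mul_of_nonneg_right hcx (by linarith)
  · subst h; simp
  · obtain ⟨c, hc, hc'⟩ := exists_hasDerivAt_eq_slope g (gdAux t) h
      (fun l hl => (gAux_hasDeriv ht (lt_of_lt_of_le hy hl.1)).continuousAt.continuousWithinAt)
      (fun l hl => gAux_hasDeriv ht (hy.trans hl.1))
    have hcx : gdAux t x ≤ gdAux t c := gdAux_antitone ht (hy.trans hc.1) hc.2.le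
    have heq : g x - g y = gdAux t c * (x - y) := by
      rw [hc', div_mul_cancel₀]
      exact sub_ne_zero.mpr h.ne'
    have heq' : g y - g x = gdAux t c * (y - x) := by nlinarith [heq]
    rw [heq']
    exact mul_le_mul_of_nonpos_right hcx (by linarith)

lemma sumFilterAux {n : ℕ} (f : Fin n → ℝ) {k : ℕ} (hk : k ≤ n) :
    ∑ i ∈ Finset.univ.filter (fun i : Fin n => (i : ℕ) < k), f i
      = ∑ i ∈ Finset.range k, (fun i => if h : i < n then f ⟨i, h⟩ else 0) i := by
  have hfr : Finset.filter (fun i => i < k) (Finset.range n) = Finset.range k := by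
    ext i
    simp only [Finset.mem_filter, Finset.mem_range]
    exact ⟨fun h => h.2, fun h => ⟨lt_of_lt_of_le h hk, h⟩⟩
  have hcongr : ∀ a : Fin n, (if (a : ℕ) < k then f a else 0)
      = (fun i => if i < k then (if h : i < n then f ⟨i, h⟩ else 0) else 0) ((a : ℕ)) := by
    intro a; simp [a.isLt]
  rw [Finset.sum_filter, Finset.sum_congr rfl (fun a _ => hcongr a),
    Fin.sum_univ_eq_sum_range (fun i => if i < k then (if h : i < n then f ⟨i, h⟩ else 0) else 0) n,
    ← Finset.sum_filter, hfr]

/-- Hardy–Littlewood–Pólya: if the increasingly sorted `a` is majorized by `b`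
(prefix sums of `a` at least those of `b`, equal total sums), then the concave
function `l ↦ log (1 - exp (l t))`, `t < 0`, has larger sum on `a`. -/
lemma hlpCore {n : ℕ} (a b : Fin n → ℝ) (ha : Monotone a)
    (hpa : ∀ i, 0 < a i) (hpb : ∀ i, 0 < b i) {t : ℝ} (ht : t < 0)
    (hsum : ∑ i, a i = ∑ i, b i)
    (hpre : ∀ k : ℕ, 1 ≤ k → k ≤ n - 1 →
      ∑ i ∈ Finset.univ.filter (fun i : Fin n => (i : ℕ) < k), b i ≤
      ∑ i ∈ Finset.univ.filter (fun i : Fin n => (i : ℕ) < k), a i) :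
    ∑ i, Real.log (1 - Real.exp (b i * t)) ≤ ∑ i, Real.log (1 - Real.exp (a i * t)) := by
  set v : ℕ → ℝ := fun i => if h : i < n then a ⟨i, h⟩ else 0 with hv
  set w : ℕ → ℝ := fun i => if h : i < n then b ⟨i, h⟩ else 0 with hw
  set s : ℕ → ℝ := fun i => gdAux t (v i) with hs
  set d : ℕ → ℝ := fun i => w i - v i with hd
  have hD : ∀ k : ℕ, k ≤ n → ∑ j ∈ Finset.range k, d j =
      (∑ i ∈ Finset.univ.filter (fun i : Fin n => (i : ℕ) < k), b i) -
      (∑ i ∈ Finset.univ.filter (fun i : Fin n => (i : ℕ) < k), a i) := by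
    intro k hk
    rw [sumFilterAux b hk, sumFilterAux a hk, ← Finset.sum_sub_distrib]
  have hfull : Finset.univ.filter (fun i : Fin n => (i : ℕ) < n) = Finset.univ := by
    ext i; simp [i.isLt]
  have hDn : ∑ j ∈ Finset.range n, d j = 0 := by
    rw [hD n le_rfl, hfull, hsum]; ring
  have hDk : ∀ k : ℕ, 1 ≤ k → k ≤ n - 1 → ∑ j ∈ Finset.range k, d j ≤ 0 := by
    intro k h1 h2
    rw [hD k (by omega)]
    linarith [hpre k h1 h2]
  have step1 : ∑ i, (Real.log (1 - Real.exp (b i * t)) - Real.log (1 - Real.exp (a i * t)))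
      ≤ ∑ i ∈ Finset.range n, s i * d i := by
    have hconv : ∑ i ∈ Finset.range n, s i * d i
        = ∑ i : Fin n, gdAux t (a i) * (b i - a i) := by
      rw [← Fin.sum_univ_eq_sum_range (fun i => s i * d i) n]
      apply Finset.sum_congr rfl
      intro i _
      simp [hs, hd, hv, hw, i.isLt]
    rw [hconv]
    exact Finset.sum_le_sum fun i _ => gAux_super ht (hpa i) (hpb i)
  have step2 : ∑ i ∈ Finset.range n, s i * d i ≤ 0 := by
    have habel := Finset.sum_range_by_parts s d n
    simp only [smul_eq_mul] at habel
    rw [habel, hDn, mul_zero, zero_sub, neg_nonpos]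
    apply Finset.sum_nonneg
    intro i hi
    rw [Finset.mem_range] at hi
    have hin : i < n := by omega
    have hin1 : i + 1 < n := by omega
    have hsle : s (i + 1) ≤ s i := by
      have hvv : v i ≤ v (i + 1) := by
        simp only [hv, dif_pos hin, dif_pos hin1]
        exact ha (by simp [Fin.le_def])
      have hvpos : 0 < v i := by simp only [hv, dif_pos hin]; exact hpa _
      exact gdAux_antitone ht hvpos hvv
    have hDle : ∑ j ∈ Finset.range (i + 1), d j ≤ 0 := hDk (i + 1) (by omega) (by omega)
    nlinarith [hsle, hDle]
  have hfin := le_trans step1 step2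
  rw [Finset.sum_sub_distrib] at hfin
  linarith

/-- Theorem 2: if `λ ≺ᵐ μ`, then the distribution function of the parallel system
with Exponentiated Chen components `F(x; α, β, λᵢ)` is pointwise at least that of the
parallel system with components `F(x; α, β, μᵢ)`, i.e. `X_{n:n} ≤_st Y_{n:n}`. -/
theorem parallel_st_order_lambda (α β : ℝ) (hα : 0 < α) (hβ : 0 < β)
    {n : ℕ} (lam mu : Fin n → ℝ)
    (hlam : ∀ i, 0 < lam i) (hmu : ∀ i, 0 < mu i) (hmaj : MajorizedBy lam mu) :
    ∀ x : ℝ, 0 < x →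
      ∏ k, (1 - Real.exp (lam k * (1 - Real.exp (x ^ β)))) ^ α ≥
        ∏ k, (1 - Real.exp (mu k * (1 - Real.exp (x ^ β)))) ^ α := by
  intro x hx
  set T := 1 - Real.exp (x ^ β) with hTdef
  have hxb : 0 < x ^ β := Real.rpow_pos_of_pos hx β
  have hT : T < 0 := by
    have h1 : (1 : ℝ) < Real.exp (x ^ β) := by
      simpa using Real.exp_lt_exp.mpr hxb
    simp only [hTdef]; linarith
  -- rewrite each product as an exponential of a sum of logs
  have key : ∀ f : Fin n → ℝ, (∀ i, 0 < f i) →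
      ∏ k, (1 - Real.exp (f k * T)) ^ α
        = Real.exp ((∑ k, Real.log (1 - Real.exp (f k * T))) * α) := by
    intro f hf
    rw [Finset.sum_mul, Real.exp_sum]
    apply Finset.prod_congr rfl
    intro k _
    have hpos : 0 < 1 - Real.exp (f k * T) := by
      have := expAux_lt_one hT (hf k); linarith
    rw [Real.rpow_def_of_pos hpos]
  rw [key lam hlam, key mu hmu, ge_iff_le, Real.exp_le_exp]
  apply mul_le_mul_of_nonneg_right _ hα.le
  -- pass to the sorted rearrangements
  have hsortL : ∀ F : ℝ → ℝ, ∑ k, F (sortedAsc lam k) = ∑ k, F (lam k) := fun F =>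
    Equiv.sum_comp (Tuple.sort lam) (fun j => F (lam j))
  have hsortM : ∀ F : ℝ → ℝ, ∑ k, F (sortedAsc mu k) = ∑ k, F (mu k) := fun F =>
    Equiv.sum_comp (Tuple.sort mu) (fun j => F (mu j))
  rw [← hsortL (fun z => Real.log (1 - Real.exp (z * T))),
    ← hsortM (fun z => Real.log (1 - Real.exp (z * T)))]
  apply hlpCore (sortedAsc lam) (sortedAsc mu) (Tuple.monotone_sort lam)
    (fun i => hlam _) (fun i => hmu _) hT
  · have h1 := hsortL id
    have h2 := hsortM id
    simp only [id_eq] at h1 h2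
    rw [h1, h2]; exact hmaj.1
  · exact fun k h1 h2 => hmaj.2 k h1 h2
end

section
/- Let λ > 1. Define g(t) = (t+1)e^{λ(1-e^t)} + λ t e^t - t - 1 for t ≥ 0. Then g(0) = 0 and g(t) > 0 for all t > 0. -/
/-! Writing `E = e^{λ(1-e^t)}`, the derivative factors as
`g'(t) = (λ e^t (t+1) - 1)(1 - E)`, and for `t > 0`, `λ ≥ 1` both factors are positive,
so `g` is strictly increasing on `[0, ∞)` from `g(0) = 0`. -/

open Real Set

noncomputable def g (lam t : ℝ) : ℝ :=
  (t + 1) * exp (lam * (1 - exp t)) + lam * t * exp t - t - 1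

theorem hasDerivAt_g (lam t : ℝ) :
    HasDerivAt (g lam) ((lam * exp t * (t + 1) - 1) * (1 - exp (lam * (1 - exp t)))) t := by
  have hE : HasDerivAt (fun t => exp (lam * (1 - exp t)))
      (exp (lam * (1 - exp t)) * (lam * -exp t)) t :=
    (((hasDerivAt_exp t).const_sub 1).const_mul lam).exp
  have hlin := ((hasDerivAt_id' t).const_mul lam).mul (hasDerivAt_exp t)
  exact ((((((hasDerivAt_id' t).add_const 1).mul hE).add hlin).sub (hasDerivAt_id' t)).sub_const
    1).congr_deriv (by ring)

theorem deriv_g_pos {lam t : ℝ} (hlam : 1 ≤ lam) (ht : 0 < t) :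
    0 < deriv (g lam) t := by
  rw [(hasDerivAt_g lam t).deriv]
  have hexp : 1 < exp t := one_lt_exp_iff.mpr ht
  have hfirst : 1 < lam * exp t * (t + 1) := by
    calc (1 : ℝ) < exp t * (t + 1) := one_lt_mul_of_lt_of_le hexp (by linarith)
      _ ≤ lam * (exp t * (t + 1)) := le_mul_of_one_le_left (by positivity) hlam
      _ = lam * exp t * (t + 1) := by ring
  have hsecond : exp (lam * (1 - exp t)) < 1 :=
    exp_lt_one_iff.mpr (mul_neg_of_pos_of_neg (by linarith) (by linarith))
  exact mul_pos (by linarith) (by linarith)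

theorem strictMonoOn_g {lam : ℝ} (hlam : 1 ≤ lam) : StrictMonoOn (g lam) (Ici 0) := by
  refine strictMonoOn_of_deriv_pos (convex_Ici 0)
    (fun t _ => (hasDerivAt_g lam t).continuousAt.continuousWithinAt) fun t ht => ?_
  rw [interior_Ici] at ht
  exact deriv_g_pos hlam ht

theorem g_zero (lam : ℝ) : g lam 0 = 0 := by
  simp [g]

/-- For `λ > 1`, the function `g(t) = (t+1) e^{λ(1-e^t)} + λ t e^t - t - 1` satisfies
`g(0) = 0` and `g(t) > 0` for all `t > 0`. -/
theorem g_pos (lam : ℝ) (hlam : 1 < lam) :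
    ((0 + 1) * Real.exp (lam * (1 - Real.exp 0)) + lam * 0 * Real.exp 0 - 0 - 1 = 0) ∧
      ∀ t : ℝ, 0 < t →
        (t + 1) * Real.exp (lam * (1 - Real.exp t)) + lam * t * Real.exp t - t - 1 > 0 := by
  refine ⟨g_zero lam, fun t ht => ?_⟩
  have hlt : g lam 0 < g lam t :=
    strictMonoOn_g hlam.le self_mem_Ici (mem_Ici.mpr ht.le) ht
  rwa [g_zero] at hlt
end

section
/- Let λ > 1. Define φ₂(t) = t·e^{λ(1-e^t)+t} / (1 - e^{λ(1-e^t)}) for t > 0. Then φ₂ is strictly decreasing on (0,∞). -/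
/-!
Multiplying numerator and denominator by `e^u`, `u = λ(eᵗ - 1)`, gives `φ₂(t) = t eᵗ / (e^u - 1)`.
Its derivative is negative exactly when `(1 + t)(1 - e^{-u}) < λ t eᵗ`, and this follows from
`tanh (x / 2) ≤ x / 2` used at `x = u` and at `x = t`, together with `λ > 1`.
-/

open Real Set

/-- This is `tanh (x / 2) ≤ x / 2` with the denominators cleared. -/
lemma two_mul_exp_sub_one_le {x : ℝ} (hx : 0 ≤ x) : 2 * (exp x - 1) ≤ x * (exp x + 1) := by
  have hmono : Monotone fun y : ℝ => (y - 2) * exp y + y + 2 := by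
    refine monotone_of_deriv_nonneg (by fun_prop) fun y => ?_
    have hderiv : HasDerivAt (fun y : ℝ => (y - 2) * exp y + y + 2)
        (1 * exp y + (y - 2) * exp y + 1) y :=
      ((((hasDerivAt_id' y).sub_const 2).mul (hasDerivAt_exp y)).add (hasDerivAt_id' y)).add_const 2
    have hle := mul_le_mul_of_nonneg_right (add_one_le_exp (-y)) (exp_pos y).le
    rw [← exp_add, neg_add_cancel, exp_zero] at hle
    rw [hderiv.deriv]
    linarith
  linarith [hmono hx, exp_zero]

-- At `v = 0` both sides are junk `_ / 0 = 0`.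
lemma exp_add_div_one_sub_exp (v t : ℝ) : exp (v + t) / (1 - exp v) = exp t / (exp (-v) - 1) := by
  rw [exp_add, exp_neg, ← mul_div_mul_left (exp t) _ (exp_pos v).ne', mul_sub,
    mul_inv_cancel₀ (exp_pos v).ne', mul_one, mul_comm]

/-- The tanh bound at `u = λ(eᵗ - 1)` gives `1 - e^{-u} ≤ 2u / (2 + u)`; the bound at `t`,
`(eᵗ - 1)² ≥ 0` and `λ > 1` give `2(1 + t)(eᵗ - 1) < t eᵗ (2 + u)`. -/
lemma one_add_mul_exp_sub_one_lt {lam t : ℝ} (hlam : 1 < lam) (ht : 0 < t) :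
    (1 + t) * (exp (lam * (exp t - 1)) - 1) < lam * t * exp t * exp (lam * (exp t - 1)) := by
  have hE : 1 < exp t := one_lt_exp_iff.mpr ht
  have hu : 0 < lam * (exp t - 1) := mul_pos (by linarith) (by linarith)
  set E := exp t
  set U := exp (lam * (exp t - 1))
  have hU : (2 + lam * (E - 1)) * (U - 1) ≤ 2 * (lam * (E - 1)) * U := by
    linarith [two_mul_exp_sub_one_le hu.le]
  have hEt : 2 * (1 + t) * (E - 1) < t * E * (2 + lam * (E - 1)) := by
    nlinarith [two_mul_exp_sub_one_le ht.le, mul_nonneg ht.le (sq_nonneg (E - 1)),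
      mul_pos (mul_pos ht (by positivity : 0 < E))
        (mul_pos (by linarith : 0 < lam - 1) (by linarith : 0 < E - 1))]
  refine lt_of_mul_lt_mul_right (a := 2 + lam * (E - 1)) ?_ (by positivity)
  calc (1 + t) * (U - 1) * (2 + lam * (E - 1))
      ≤ (1 + t) * (2 * (lam * (E - 1)) * U) := by
        rw [mul_assoc, mul_comm (U - 1)]; exact mul_le_mul_of_nonneg_left hU (by linarith)
    _ = lam * U * (2 * (1 + t) * (E - 1)) := by ring
    _ < lam * U * (t * E * (2 + lam * (E - 1))) := mul_lt_mul_of_pos_left hEt (by positivity)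
    _ = lam * t * E * U * (2 + lam * (E - 1)) := by ring

lemma strictAntiOn_mul_exp_div_exp_sub_one {lam : ℝ} (hlam : 1 < lam) :
    StrictAntiOn (fun t => t * exp t / (exp (lam * (exp t - 1)) - 1)) (Ioi 0) := by
  have hden : ∀ t ∈ Ioi (0 : ℝ), 0 < exp (lam * (exp t - 1)) - 1 := fun t ht => by
    have : 0 < lam * (exp t - 1) := mul_pos (by linarith) (by linarith [one_lt_exp_iff.mpr ht])
    linarith [one_lt_exp_iff.mpr this]
  refine strictAntiOn_of_deriv_neg (convex_Ioi 0)
    (ContinuousOn.div (by fun_prop) (by fun_prop) fun t ht => (hden t ht).ne') fun t ht => ?_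
  rw [interior_Ioi] at ht
  have hinner : HasDerivAt (fun t => lam * (exp t - 1)) (lam * exp t) t := by
    simpa using ((hasDerivAt_exp t).sub_const 1).const_mul lam
  have hderiv : HasDerivAt (fun t => t * exp t / (exp (lam * (exp t - 1)) - 1)) _ t :=
    ((hasDerivAt_id' t).mul (hasDerivAt_exp t)).div (hinner.exp.sub_const 1) (hden t ht).ne'
  rw [hderiv.deriv, Pi.mul_apply]
  refine div_neg_of_neg_of_pos ?_ (pow_pos (hden t ht) 2)
  linarith [mul_lt_mul_of_pos_left (one_add_mul_exp_sub_one_lt hlam ht) (exp_pos t)]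

/-- For `λ > 1`, the function `φ₂(t) = t e^{λ(1-e^t)+t} / (1 - e^{λ(1-e^t)})` is
strictly decreasing on `(0, ∞)`. -/
theorem phi2_strictAntiOn (lam : ℝ) (hlam : 1 < lam) :
    StrictAntiOn
      (fun t : ℝ =>
        t * Real.exp (lam * (1 - Real.exp t) + t) / (1 - Real.exp (lam * (1 - Real.exp t))))
      (Set.Ioi 0) := by
  have hform : ∀ t : ℝ, t * exp (lam * (1 - exp t) + t) / (1 - exp (lam * (1 - exp t)))
      = t * exp t / (exp (lam * (exp t - 1)) - 1) := fun t => by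
    rw [mul_div_assoc, exp_add_div_one_sub_exp, ← mul_div_assoc, neg_mul_eq_mul_neg, neg_sub]
  simpa only [hform] using strictAntiOn_mul_exp_div_exp_sub_one hlam
end

section
/- Fix β > 0 and λ > 0. Let α = (α₁,…,αₙ) and α* = (α₁*,…,αₙ*) be vectors of positive reals such that α is majorized by α*. Then for every x > 0, ∏_{k=1}^{n} [1 - (1 - e^{λ(1-e^{x^β})})^{α_k}] ≥ ∏_{k=1}^{n} [1 - (1 - e^{λ(1-e^{x^β})})^{α_k*}]. (That is, the survival function of the minimum order statistic of independent Exponentiated Chen variables with parameters (αᵢ, β, λ) is a Schur-concave function of the vector α = (α₁,…,αₙ) on (0,∞)ⁿ.) -/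
open Finset Real

/-- Tangent-line inequality for the concave function `s ↦ log (1 - t^s)`. -/
lemma tangent_log (t : ℝ) (ht0 : 0 < t) (ht1 : t < 1) {x y : ℝ} (hx : 0 < x) (hy : 0 < y) :
    Real.log (1 - t ^ y) ≤ Real.log (1 - t ^ x)
      + (-Real.log t) * t ^ x / (1 - t ^ x) * (y - x) := by
  set u := t ^ x with hu
  set v := t ^ y with hv
  have hu0 : 0 < u := Real.rpow_pos_of_pos ht0 x
  have hv0 : 0 < v := Real.rpow_pos_of_pos ht0 y
  have hu1 : u < 1 := Real.rpow_lt_one ht0.le ht1 hx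
  have hv1 : v < 1 := Real.rpow_lt_one ht0.le ht1 hy
  have hlogu : Real.log u = x * Real.log t := Real.log_rpow ht0 x
  have hlogv : Real.log v = y * Real.log t := Real.log_rpow ht0 y
  -- step A
  have hA : Real.log (1 - v) - Real.log (1 - u) ≤ (u - v) / (1 - u) := by
    have h1u : (0:ℝ) < 1 - u := by linarith
    have h := Real.log_le_sub_one_of_pos (show 0 < (1 - v) / (1 - u) from div_pos (by linarith) h1u)
    rw [Real.log_div (by linarith) (by linarith)] at h
    have heq : (1 - v) / (1 - u) - 1 = (u - v) / (1 - u) := by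
      rw [div_sub_one h1u.ne']
      ring_nf
    linarith [heq ▸ h]
  -- step B
  have hB : (u - v) / (1 - u) ≤ u * (Real.log u - Real.log v) / (1 - u) := by
    have h := Real.log_le_sub_one_of_pos (show 0 < v / u by positivity)
    rw [Real.log_div hv0.ne' hu0.ne'] at h
    have key : u - v ≤ u * (Real.log u - Real.log v) := by
      have := mul_le_mul_of_nonneg_left h hu0.le
      have hvu : u * (v / u) = v := by field_simp
      nlinarith
    have h1u : (0:ℝ) < 1 - u := by linarith
    exact div_le_div_of_nonneg_right key h1u.le
  have hC : u * (Real.log u - Real.log v) / (1 - u)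
      = (-Real.log t) * u / (1 - u) * (y - x) := by
    rw [hlogu, hlogv]; ring
  linarith [hA, hB.trans_eq hC]

/-- Antitonicity of the slope `s ↦ (-log t) t^s / (1 - t^s)`. -/
lemma slope_anti (t : ℝ) (ht0 : 0 < t) (ht1 : t < 1) {x y : ℝ} (hx : 0 < x) (hxy : x ≤ y) :
    (-Real.log t) * t ^ y / (1 - t ^ y) ≤ (-Real.log t) * t ^ x / (1 - t ^ x) := by
  have hu0 : 0 < t ^ x := Real.rpow_pos_of_pos ht0 x
  have hv0 : 0 < t ^ y := Real.rpow_pos_of_pos ht0 y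
  have hu1 : t ^ x < 1 := Real.rpow_lt_one ht0.le ht1 hx
  have hv1 : t ^ y < 1 := Real.rpow_lt_one ht0.le ht1 (lt_of_lt_of_le hx hxy)
  have hvu : t ^ y ≤ t ^ x := Real.rpow_le_rpow_of_exponent_ge ht0 ht1.le hxy
  have hlt : 0 < -Real.log t := by
    have := Real.log_neg ht0 ht1; linarith
  rw [div_le_div_iff₀ (by linarith) (by linarith)]
  nlinarith

/-- Abel-summation sign lemma. -/
lemma abel_nonpos (s d : ℕ → ℝ) (n : ℕ)
    (hs : ∀ i, i + 1 < n → s (i + 1) ≤ s i)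
    (hD : ∀ k, 1 ≤ k → k ≤ n - 1 → ∑ i ∈ Finset.range k, d i ≤ 0)
    (hDn : ∑ i ∈ Finset.range n, d i = 0) :
    ∑ i ∈ Finset.range n, s i * d i ≤ 0 := by
  have h := Finset.sum_range_by_parts s d n
  simp only [smul_eq_mul] at h
  rw [h, hDn, mul_zero, zero_sub, neg_nonpos]
  apply Finset.sum_nonneg
  intro i hi
  rw [Finset.mem_range] at hi
  have h1 : s (i + 1) - s i ≤ 0 := by
    have := hs i (by omega); linarith
  have h2 : ∑ j ∈ Finset.range (i + 1), d j ≤ 0 := hD (i + 1) (by omega) (by omega)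
  nlinarith

lemma filter_sum_eq {n : ℕ} (k : ℕ) (hk : k ≤ n) (f : Fin n → ℝ) (F : ℕ → ℝ)
    (hF : ∀ i : Fin n, F i = f i) :
    ∑ i ∈ Finset.univ.filter (fun i : Fin n => (i : ℕ) < k), f i
      = ∑ i ∈ Finset.range k, F i := by
  rw [Finset.sum_filter]
  have h1 : ∑ i : Fin n, (if (i : ℕ) < k then f i else 0)
      = ∑ i ∈ Finset.range n, (if i < k then F i else 0) := by
    rw [← Fin.sum_univ_eq_sum_range (fun j => if j < k then F j else 0) n]
    exact Finset.sum_congr rfl fun i _ => by simp [hF i]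
  rw [h1, ← Finset.sum_filter]
  congr 1
  ext i
  simp only [Finset.mem_filter, Finset.mem_range]
  omega

/-- HLP-type lemma specialized to `g s = log (1 - t^s)`. -/
lemma sum_log_le (t : ℝ) (ht0 : 0 < t) (ht1 : t < 1) {n : ℕ} (A B : Fin n → ℝ)
    (hA : ∀ i, 0 < A i) (hB : ∀ i, 0 < B i) (hAmono : Monotone A)
    (hsum : ∑ i, A i = ∑ i, B i)
    (hpre : ∀ k : ℕ, 1 ≤ k → k ≤ n - 1 →
      ∑ i ∈ Finset.univ.filter (fun i : Fin n => (i : ℕ) < k), A i ≥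
        ∑ i ∈ Finset.univ.filter (fun i : Fin n => (i : ℕ) < k), B i) :
    ∑ i, Real.log (1 - t ^ (B i)) ≤ ∑ i, Real.log (1 - t ^ (A i)) := by
  set c : ℝ → ℝ := fun s => (-Real.log t) * t ^ s / (1 - t ^ s) with hc
  have step1 : ∑ i, (Real.log (1 - t ^ (B i)) - Real.log (1 - t ^ (A i)))
      ≤ ∑ i, c (A i) * (B i - A i) := by
    apply Finset.sum_le_sum
    intro i _
    have := tangent_log t ht0 ht1 (hA i) (hB i)
    simp only [hc]
    linarith
  set FA : ℕ → ℝ := fun i => if h : i < n then A ⟨i, h⟩ else 0 with hFA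
  set FB : ℕ → ℝ := fun i => if h : i < n then B ⟨i, h⟩ else 0 with hFB
  set s : ℕ → ℝ := fun i => if h : i < n then c (A ⟨i, h⟩) else 0 with hs
  set d : ℕ → ℝ := fun i => FB i - FA i with hd
  have step2 : ∑ i, c (A i) * (B i - A i) = ∑ i ∈ Finset.range n, s i * d i := by
    rw [← Fin.sum_univ_eq_sum_range (fun j => s j * d j) n]
    exact Finset.sum_congr rfl fun i _ => by
      simp [hs, hd, hFA, hFB, i.isLt]
  have hDn : ∑ i ∈ Finset.range n, d i = 0 := by
    have hA' : ∑ i ∈ Finset.range n, FA i = ∑ i, A i := by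
      rw [← Fin.sum_univ_eq_sum_range FA n]
      exact Finset.sum_congr rfl fun i _ => by simp [hFA, i.isLt]
    have hB' : ∑ i ∈ Finset.range n, FB i = ∑ i, B i := by
      rw [← Fin.sum_univ_eq_sum_range FB n]
      exact Finset.sum_congr rfl fun i _ => by simp [hFB, i.isLt]
    simp only [hd, Finset.sum_sub_distrib, hA', hB', hsum]
    ring
  have step3 : ∑ i ∈ Finset.range n, s i * d i ≤ 0 := by
    apply abel_nonpos
    · intro i hi
      simp only [hs]
      rw [dif_pos hi, dif_pos (by omega : i < n)]
      exact slope_anti t ht0 ht1 (hA _) (hAmono (by simp [Fin.mk_le_mk]))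
    · intro k hk1 hk2
      have hkn : k ≤ n := by omega
      have hfA := filter_sum_eq k hkn A FA (fun i => by simp [hFA, i.isLt])
      have hfB := filter_sum_eq k hkn B FB (fun i => by simp [hFB, i.isLt])
      have := hpre k hk1 hk2
      simp only [hd, Finset.sum_sub_distrib, ← hfA, ← hfB]
      linarith
    · exact hDn
  have := step1.trans (step2 ▸ step3)
  rw [Finset.sum_sub_distrib] at this
  linarith



/-- Theorem 4: if `α ≺ᵐ α*`, then the survival function of the series system of
Exponentiated Chen components with parameters `(αᵢ, β, λ)` is pointwise at least that
with parameters `(αᵢ*, β, λ)`: it is a Schur-concave function of `α`. -/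
theorem series_survival_schur_concave_alpha (β lam : ℝ) (hβ : 0 < β) (hlam : 0 < lam)
    {n : ℕ} (a as : Fin n → ℝ)
    (ha : ∀ i, 0 < a i) (has : ∀ i, 0 < as i) (hmaj : MajorizedBy a as) :
    ∀ x : ℝ, 0 < x →
      ∏ k, (1 - (1 - Real.exp (lam * (1 - Real.exp (x ^ β)))) ^ (a k)) ≥
        ∏ k, (1 - (1 - Real.exp (lam * (1 - Real.exp (x ^ β)))) ^ (as k)) := by
  intro x hx
  set t : ℝ := 1 - Real.exp (lam * (1 - Real.exp (x ^ β))) with htdef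
  have hxb : 0 < x ^ β := Real.rpow_pos_of_pos hx β
  have hexb : 1 < Real.exp (x ^ β) := by
    calc (1:ℝ) = Real.exp 0 := Real.exp_zero.symm
    _ < Real.exp (x ^ β) := Real.exp_lt_exp.mpr hxb
  have harg : lam * (1 - Real.exp (x ^ β)) < 0 :=
    mul_neg_of_pos_of_neg hlam (by linarith)
  have ht0 : 0 < t := by
    have : Real.exp (lam * (1 - Real.exp (x ^ β))) < 1 := by
      calc Real.exp (lam * (1 - Real.exp (x ^ β))) < Real.exp 0 := Real.exp_lt_exp.mpr harg
      _ = 1 := Real.exp_zero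
    simp only [htdef]; linarith
  have ht1 : t < 1 := by
    have := Real.exp_pos (lam * (1 - Real.exp (x ^ β)))
    simp only [htdef]; linarith
  have hpos : ∀ (c : Fin n → ℝ), (∀ i, 0 < c i) → ∀ k : Fin n, 0 < 1 - t ^ (c k) := by
    intro c hc k
    have := Real.rpow_lt_one ht0.le ht1 (hc k)
    linarith
  have hprod : ∀ (c : Fin n → ℝ), (∀ i, 0 < c i) →
      ∏ k, (1 - t ^ (c k)) = Real.exp (∑ k, Real.log (1 - t ^ (c k))) := by
    intro c hc
    rw [Real.exp_sum]
    exact (Finset.prod_congr rfl fun k _ => (Real.exp_log (hpos c hc k)).symm)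
  rw [ge_iff_le, hprod a ha, hprod as has]
  apply Real.exp_le_exp.mpr
  -- pass to sorted rearrangements
  have hre : ∀ (c : Fin n → ℝ),
      ∑ k, Real.log (1 - t ^ (c k)) = ∑ k, Real.log (1 - t ^ (sortedAsc c k)) := by
    intro c
    exact (Equiv.sum_comp (Tuple.sort c) (fun j => Real.log (1 - t ^ (c j)))).symm
  rw [hre a, hre as]
  have hsum : ∑ i, sortedAsc a i = ∑ i, sortedAsc as i := by
    have h1 : ∑ i, sortedAsc a i = ∑ i, a i :=
      Equiv.sum_comp (Tuple.sort a) a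
    have h2 : ∑ i, sortedAsc as i = ∑ i, as i :=
      Equiv.sum_comp (Tuple.sort as) as
    rw [h1, h2, hmaj.1]
  exact sum_log_le t ht0 ht1 (sortedAsc a) (sortedAsc as)
    (fun i => ha _) (fun i => has _) (Tuple.monotone_sort a) hsum hmaj.2
end

section
/- Fix β > 0 and λ > 0, and let s, s* be positive reals with s ≤ s*. For t > 0 define the density of the maximum of n independent Exponentiated Chen variables whose α-parameters sum to s as f_s(x) = s·(1 - e^{λ(1-e^{x^β})})^{s-1}·β·λ·x^{β-1}·e^{λ(1-e^{x^β})+x^β}. Then the likelihood ratio x ↦ f_{s*}(x)/f_s(x) = (s*/s)·(1 - e^{λ(1-e^{x^β})})^{s*-s} is monotone nondecreasing on (0,∞). (Hence if Xᵢ ~ F(x;αᵢ,β,λ) and Yᵢ ~ F(x;αᵢ*,β,λ) are independent with ∑_{k=1}^n α_k ≤ ∑_{k=1}^n α_k*, then X_{n:n} ≤_lr Y_{n:n}.) -/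
/-- Theorem 5: for `0 < s ≤ s*`, the likelihood ratio
`x ↦ (s*/s) (1 - e^{λ(1-e^{x^β})})^{s*-s}` of the maxima of the two Exponentiated Chen
samples (with `α`-parameter sums `s` and `s*`) is monotone nondecreasing on `(0, ∞)`;
hence `X_{n:n} ≤_lr Y_{n:n}` whenever `∑ α_k ≤ ∑ α_k*`. -/
theorem parallel_lr_order_alpha_sum (β lam s t : ℝ) (hβ : 0 < β) (hlam : 0 < lam)
    (hs : 0 < s) (ht : 0 < t) (hst : s ≤ t) :
    MonotoneOn
      (fun x : ℝ => (t / s) * (1 - Real.exp (lam * (1 - Real.exp (x ^ β)))) ^ (t - s))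
      (Set.Ioi 0) := by
  intro a ha b hb hab
  have hts : 0 ≤ t - s := sub_nonneg.mpr hst
  have hdiv : 0 ≤ t / s := le_of_lt (div_pos ht hs)
  have key : ∀ x : ℝ, 0 < x →
      0 ≤ 1 - Real.exp (lam * (1 - Real.exp (x ^ β))) := by
    intro x hx
    have h1 : 1 ≤ Real.exp (x ^ β) := by
      have := Real.rpow_pos_of_pos hx β
      calc 1 = Real.exp 0 := Real.exp_zero.symm
        _ ≤ Real.exp (x ^ β) := Real.exp_le_exp.mpr (le_of_lt this)
    have h2 : lam * (1 - Real.exp (x ^ β)) ≤ 0 :=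
      mul_nonpos_of_nonneg_of_nonpos hlam.le (by linarith)
    have : Real.exp (lam * (1 - Real.exp (x ^ β))) ≤ 1 :=
      Real.exp_le_one_iff.mpr h2
    linarith
  have hmono : Real.exp (lam * (1 - Real.exp (a ^ β)))
      ≥ Real.exp (lam * (1 - Real.exp (b ^ β))) := by
    apply Real.exp_le_exp.mpr
    have : Real.exp (a ^ β) ≤ Real.exp (b ^ β) := by
      apply Real.exp_le_exp.mpr
      exact Real.rpow_le_rpow (le_of_lt ha) hab hβ.le
    nlinarith
  have h3 : 1 - Real.exp (lam * (1 - Real.exp (a ^ β)))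
      ≤ 1 - Real.exp (lam * (1 - Real.exp (b ^ β))) := by linarith
  exact mul_le_mul_of_nonneg_left (Real.rpow_le_rpow (key a ha) h3 hts) hdiv
end
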